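/- (Theorem 2, low costs regime) Fix G > 0 and costs C_i, C_j > 0 with C_i + C_j ≤ 1. For every ρ with C_j ≤ ρ ≤ 1 − C_i, the pair (B_i*, B_j*) = (ρ·G·e^{−2}, (1 − ρ)·G·e^{−2}) is a Nash equilibrium of the investment game, and the corresponding equilibrium profits are π_i = B_i*·(1 − C_i) and π_j = B_j*·(1 − C_j). -/
import Mathlib


/-- Operator profit in the high-SNR investment game: the operator with unit cost `C`
leasing `B` while the competitor leases `B'` earns `B·(ln(G/(B + B')) − 1 − C)`. -/
noncomputable def invProfit (G C B B' : ℝ) : ℝ :=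
  B * (Real.log (G / (B + B')) - 1 - C)

/-- `(Bi, Bj)` is a Nash equilibrium of the high-SNR investment game with coupled
strategy set `{(Bi, Bj) : Bi, Bj ≥ 0, Bi + Bj ≤ G·e^{−2}}`. -/
def IsInvestmentNE (G Ci Cj Bi Bj : ℝ) : Prop :=
  0 ≤ Bi ∧ 0 ≤ Bj ∧ Bi + Bj ≤ G * Real.exp (-2) ∧
  (∀ B : ℝ, 0 ≤ B → B ≤ G * Real.exp (-2) - Bj → invProfit G Ci B Bj ≤ invProfit G Ci Bi Bj) ∧
  (∀ B : ℝ, 0 ≤ B → B ≤ G * Real.exp (-2) - Bi → invProfit G Cj B Bi ≤ invProfit G Cj Bj Bi)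

lemma invLogGM (G : ℝ) (hG : 0 < G) :
    Real.log G - Real.log (G * Real.exp (-2)) = 2 := by
  rw [Real.log_mul hG.ne' (Real.exp_pos _).ne', Real.log_exp]; ring

/-- Profit at the boundary of the strategy set. -/
lemma invEq (G C r : ℝ) (hG : 0 < G) :
    invProfit G C (r * (G * Real.exp (-2))) ((1 - r) * (G * Real.exp (-2)))
      = (r * (G * Real.exp (-2))) * (1 - C) := by
  have hM : 0 < G * Real.exp (-2) := by positivity
  have hsum : r * (G * Real.exp (-2)) + (1 - r) * (G * Real.exp (-2)) = G * Real.exp (-2) := by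
    ring
  unfold invProfit
  rw [hsum, Real.log_div hG.ne' hM.ne']
  rw [invLogGM G hG]
  ring

/-- Best-response inequality. -/
lemma invAux (G C r B : ℝ) (hG : 0 < G) (hr0 : 0 < r) (hr1 : r < 1) (hrC : r ≤ 1 - C)
    (hB0 : 0 ≤ B) (hB1 : B ≤ r * (G * Real.exp (-2))) :
    invProfit G C B ((1 - r) * (G * Real.exp (-2))) ≤ (r * (G * Real.exp (-2))) * (1 - C) := by
  set M := G * Real.exp (-2) with hMdef
  have hM : 0 < M := by positivity
  set S := B + (1 - r) * M with hSdef
  have hS0 : 0 < S := by nlinarith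
  have hSM : S ≤ M := by nlinarith
  have hlogGM : Real.log G - Real.log M = 2 := invLogGM G hG
  have hlog : Real.log (G / S) = 2 + Real.log (M / S) := by
    rw [Real.log_div hG.ne' hS0.ne', Real.log_div hM.ne' hS0.ne']
    linarith
  have hln : Real.log (M / S) ≤ M / S - 1 := Real.log_le_sub_one_of_pos (by positivity)
  have hBrS : B ≤ r * S := by nlinarith
  have key : B * Real.log (M / S) ≤ (1 - C) * (r * M - B) := by
    have h1 : B * Real.log (M / S) ≤ B * (M / S - 1) := mul_le_mul_of_nonneg_left hln hB0
    have h2 : B * (M / S - 1) ≤ r * (M - S) := by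
      have h3 : B * (M - S) ≤ r * (M - S) * S := by nlinarith
      have : B * (M / S - 1) = B * (M - S) / S := by field_simp
      rw [this, div_le_iff₀ hS0]
      linarith
    have h4 : r * (M - S) ≤ (1 - C) * (M - S) := by nlinarith
    have h5 : M - S = r * M - B := by rw [hSdef]; ring
    linarith [h5 ▸ h4]
  show B * (Real.log (G / S) - 1 - C) ≤ r * M * (1 - C)
  rw [hlog]
  nlinarith [key]

/-- Theorem 2, low costs regime (`Ci + Cj ≤ 1`): for every `ρ ∈ [Cj, 1 − Ci]` the
pair `(ρ·G·e^{−2}, (1 − ρ)·G·e^{−2})` is a Nash equilibrium of the investment game,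
with profits `Bi*·(1 − Ci)` and `Bj*·(1 − Cj)`. -/
theorem stmt_8 (G Ci Cj ρ : ℝ) (hG : 0 < G) (hCi : 0 < Ci) (hCj : 0 < Cj)
    (hsum : Ci + Cj ≤ 1) (hρ1 : Cj ≤ ρ) (hρ2 : ρ ≤ 1 - Ci) :
    IsInvestmentNE G Ci Cj (ρ * G * Real.exp (-2)) ((1 - ρ) * G * Real.exp (-2)) ∧
    invProfit G Ci (ρ * G * Real.exp (-2)) ((1 - ρ) * G * Real.exp (-2))
      = (ρ * G * Real.exp (-2)) * (1 - Ci) ∧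
    invProfit G Cj ((1 - ρ) * G * Real.exp (-2)) (ρ * G * Real.exp (-2))
      = ((1 - ρ) * G * Real.exp (-2)) * (1 - Cj) := by
  have hM : 0 < G * Real.exp (-2) := by positivity
  have hρ0 : 0 < ρ := lt_of_lt_of_le hCj hρ1
  have hρlt1 : ρ < 1 := by linarith
  have hassoc : ρ * G * Real.exp (-2) = ρ * (G * Real.exp (-2)) := by ring
  have hassoc' : (1 - ρ) * G * Real.exp (-2) = (1 - ρ) * (G * Real.exp (-2)) := by ring
  have hassoc'' : (1 - (1 - ρ)) * (G * Real.exp (-2)) = ρ * (G * Real.exp (-2)) := by ring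
  have heqI : invProfit G Ci (ρ * G * Real.exp (-2)) ((1 - ρ) * G * Real.exp (-2))
      = (ρ * G * Real.exp (-2)) * (1 - Ci) := by
    rw [hassoc, hassoc']; exact invEq G Ci ρ hG
  have heqJ : invProfit G Cj ((1 - ρ) * G * Real.exp (-2)) (ρ * G * Real.exp (-2))
      = ((1 - ρ) * G * Real.exp (-2)) * (1 - Cj) := by
    rw [hassoc, hassoc', ← hassoc'']
    exact invEq G Cj (1 - ρ) hG
  have h1 : 0 ≤ ρ * G * Real.exp (-2) := by nlinarith
  have h2 : 0 ≤ (1 - ρ) * G * Real.exp (-2) := by nlinarith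
  refine ⟨⟨h1, h2, by nlinarith, ?_, ?_⟩, heqI, heqJ⟩
  · intro B hB0 hB1
    rw [heqI, hassoc, hassoc']
    exact invAux G Ci ρ B hG hρ0 hρlt1 hρ2 hB0 (by nlinarith)
  · intro B hB0 hB1
    rw [heqJ, hassoc, hassoc', ← hassoc'']
    exact invAux G Cj (1 - ρ) B hG (by linarith) (by linarith) (by linarith) hB0 (by nlinarith)
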